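/- Let R be a commutative ring with identity such that the graph Γ(R) contains a cycle. Then: (1) every vertex of Γ(R) that lies on some cycle of Γ(R) lies on a cycle of length three or on a cycle of length four (the core of Γ(R) is a union of triangles and rectangles); (2) every vertex of Γ(R) either has degree one (is an end vertex) or lies on some cycle of Γ(R). -/

import Mathlib

universe u

/-- The co-maximal graph `Ω(R)`: vertices are the elements of `R`, with distinct `x`, `y`
adjacent iff `Rx + Ry = R`. -/
def comaximalGraph (R : Type*) [CommRing R] : SimpleGraph R where
  Adj x y := x ≠ y ∧ Ideal.span {x} ⊔ Ideal.span {y} = ⊤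
  symm := ⟨fun _ _ ⟨h1, h2⟩ => ⟨h1.symm, by rwa [sup_comm]⟩⟩
  loopless := ⟨fun _ ⟨h, _⟩ => h rfl⟩

/-- Vertices of `Γ(R)`: the elements of `R \ (U(R) ∪ J(R))`. -/
def GammaVert (R : Type*) [CommRing R] : Type _ :=
  {x : R // ¬IsUnit x ∧ x ∉ (⊥ : Ideal R).jacobson}

/-- The graph `Γ(R)` induced on `R \ (U(R) ∪ J(R))`: distinct vertices `x`, `y` are
adjacent iff `Rx + Ry = R`. -/
def Gamma (R : Type*) [CommRing R] : SimpleGraph (GammaVert R) where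
  Adj a b := a ≠ b ∧ Ideal.span {a.1} ⊔ Ideal.span {b.1} = ⊤
  symm := ⟨fun _ _ ⟨h1, h2⟩ => ⟨h1.symm, by rwa [sup_comm]⟩⟩
  loopless := ⟨fun _ ⟨h, _⟩ => h rfl⟩

/-- Vertices of `Γ_r(R)`: the principal ideals `Rx` for `x ∈ R \ (U(R) ∪ J(R))`. -/
def GammaRVert (R : Type*) [CommRing R] : Type _ :=
  {I : Ideal R // ∃ x : R, ¬IsUnit x ∧ x ∉ (⊥ : Ideal R).jacobson ∧ I = Ideal.span {x}}

/-- The graph `Γ_r(R)` on `{Rx | x ∈ R \ (U(R) ∪ J(R))}`: distinct vertices `Rx`, `Ry`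
are adjacent iff `Rx + Ry = R`. -/
def GammaR (R : Type*) [CommRing R] : SimpleGraph (GammaRVert R) where
  Adj I J := I ≠ J ∧ I.1 ⊔ J.1 = ⊤
  symm := ⟨fun _ _ ⟨h1, h2⟩ => ⟨h1.symm, by rwa [sup_comm]⟩⟩
  loopless := ⟨fun _ ⟨h, _⟩ => h rfl⟩

/-- A simple graph is a split graph if its vertex set is the disjoint union of a set
inducing a complete graph and an independent set. -/
def IsSplitGraph {V : Type*} (G : SimpleGraph V) : Prop :=
  ∃ K D : Set V, K ∪ D = Set.univ ∧ K ∩ D = ∅ ∧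
    (∀ x ∈ K, ∀ y ∈ K, x ≠ y → G.Adj x y) ∧
    (∀ x ∈ D, ∀ y ∈ D, ¬G.Adj x y)

/-- A simple graph is bipartite if its vertex set is the disjoint union of two sets
such that every edge goes between them. -/
def IsBipartiteGraph {V : Type*} (G : SimpleGraph V) : Prop :=
  ∃ A B : Set V, A ∪ B = Set.univ ∧ A ∩ B = ∅ ∧
    ∀ x y, G.Adj x y → (x ∈ A ∧ y ∈ B) ∨ (x ∈ B ∧ y ∈ A)

/-- A simple graph is complete bipartite if its vertex set is the disjoint union of two
sets such that two vertices are adjacent iff they lie in different parts. -/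
def IsCompleteBipartiteGraph {V : Type*} (G : SimpleGraph V) : Prop :=
  ∃ A B : Set V, A ∪ B = Set.univ ∧ A ∩ B = ∅ ∧
    ∀ x y, G.Adj x y ↔ ((x ∈ A ∧ y ∈ B) ∨ (x ∈ B ∧ y ∈ A))

/-!
Suppose a vertex `x` of `Γ(R)` has two distinct neighbours `y`, `z` but lies on no triangle
and no rectangle. Every non-unit `w` coprime to `y` and `z` closes a rectangle `x y w z` unless
`w = x`; applied to `w = x²` this makes `x` idempotent, and applied to `w = x + (1 - x) t` it
shows that every `t` is either killed by `1 - x` or coprime to `x`. Excluding triangles puts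
`x n` into `J(R)` for every vertex `n` coprime to `x`. For an edge `a b`, not both ends are
killed by `1 - x` (as `x ≠ 1`), so one end, say `b`, is coprime to `x`; then `x b ∈ J(R)` forces
`a ∣ x`, hence `a` is coprime to `y` and `z`, and `a = x`. So every edge of `Γ(R)` contains `x`,
and `Γ(R)` has no cycle at all. Both parts of the theorem follow, since a vertex on a cycle has
two distinct neighbours, and every vertex `x` has a neighbour: as `x ∉ J(R)`, some `x t + 1` is
a non-unit, and it is coprime to `x`.
-/

namespace SimpleGraph

variable {V : Type*} {G : SimpleGraph V}

lemma exists_isCycle_length_three {a b c : V} (hab : G.Adj a b) (hbc : G.Adj b c)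
    (hca : G.Adj c a) : ∃ w : G.Walk a a, w.IsCycle ∧ w.length = 3 := by
  refine ⟨.cons hab (.cons hbc (.cons hca .nil)), ?_, rfl⟩
  simp [Walk.isCycle_def, hab.ne, hbc.ne, hca.ne, hab.ne', hca.ne']

lemma exists_isCycle_length_four {a b c d : V} (hab : G.Adj a b) (hbc : G.Adj b c)
    (hcd : G.Adj c d) (hda : G.Adj d a) (hac : a ≠ c) (hbd : b ≠ d) :
    ∃ w : G.Walk a a, w.IsCycle ∧ w.length = 4 := by
  refine ⟨.cons hab (.cons hbc (.cons hcd (.cons hda .nil))), ?_, rfl⟩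
  simp [Walk.isCycle_def, hab.ne, hbc.ne, hcd.ne, hda.ne, hab.ne', hda.ne', hac, hbd, hac.symm]

lemma isAcyclic_of_forall_adj_eq_or_eq {x : V} (h : ∀ a b, G.Adj a b → a = x ∨ b = x) :
    G.IsAcyclic := by
  intro v c hc
  have hlen := hc.three_le_length
  have hadj (i : ℕ) (hi : i < c.length) : G.Adj (c.getVert i) (c.getVert (i + 1)) :=
    c.adj_getVert_succ hi
  have h02 : c.getVert 0 ≠ c.getVert 2 := hc.getVert_sub_one_ne_getVert_add_one (i := 1) (by omega)
  have h13 : c.getVert 1 ≠ c.getVert 3 := hc.getVert_sub_one_ne_getVert_add_one (i := 2) (by omega)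
  have h1 : c.getVert 1 = x := by
    by_contra h1
    exact h02 (((h _ _ (hadj 0 (by omega))).resolve_right h1).trans
      ((h _ _ (hadj 1 (by omega))).resolve_left h1).symm)
  rcases h _ _ (hadj 2 (by omega)) with h2 | h3
  · exact (hadj 1 (by omega)).ne (h1.trans h2.symm)
  · exact h13 (h1.trans h3.symm)

end SimpleGraph

open SimpleGraph

section

variable {R : Type*} [CommRing R]

lemma IsCoprime.isUnit_of_mem_jacobson_bot {a b : R} (h : IsCoprime a b)
    (ha : a ∈ (⊥ : Ideal R).jacobson) : IsUnit b := by
  obtain ⟨u, v, huv⟩ := h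
  have hb : v * b = a * -u + 1 := by linear_combination huv
  exact isUnit_of_mul_isUnit_right (hb ▸ Ideal.mem_jacobson_bot.mp ha (-u))

lemma mul_mem_jacobson_bot_of_forall_isCoprime_isUnit {e n : R}
    (h : ∀ v, IsCoprime v e → IsCoprime v n → IsUnit v) : e * n ∈ (⊥ : Ideal R).jacobson :=
  Ideal.mem_jacobson_bot.mpr fun r => h _ ⟨1, -(n * r), by ring⟩ ⟨1, -(e * r), by ring⟩

lemma IsIdempotentElem.dvd_of_isCoprime_of_mul_mem_jacobson_bot {e a b : R}
    (he : IsIdempotentElem e) (hab : IsCoprime a b) (hb : e * b ∈ (⊥ : Ideal R).jacobson) :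
    a ∣ e := by
  obtain ⟨r, s, hrs⟩ := hab
  obtain ⟨v, hv⟩ := (Ideal.mem_jacobson_bot.mp hb (-s)).exists_left_inv
  -- `e * b * -s + 1 = (1 - e) + e * r * a` since `r * a + s * b = 1`, and `e` kills `1 - e`
  exact ⟨v * e * r, by linear_combination -e * hv - e ^ 2 * v * hrs - v * (1 - r * a) * he.eq⟩

lemma IsIdempotentElem.mul_eq_zero_or_isCoprime {e : R} (he : IsIdempotentElem e)
    (h : ∀ w, e * w = e → IsUnit w ∨ w = e) (t : R) : (1 - e) * t = 0 ∨ IsCoprime e t := by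
  rcases h (e + (1 - e) * t) (by linear_combination (1 - t) * he.eq) with hu | heq
  · obtain ⟨u, hu⟩ := hu.exists_left_inv
    exact .inr ⟨u, u * (1 - e), by linear_combination hu⟩
  · exact .inl (by linear_combination heq)

def GammaVert.ofIsCoprime {w : R} (hw : ¬IsUnit w) (a : GammaVert R) (h : IsCoprime w a.1) :
    GammaVert R :=
  ⟨w, hw, fun hj => a.2.1 (h.isUnit_of_mem_jacobson_bot hj)⟩

namespace Gamma

lemma adj_iff {a b : GammaVert R} : (Gamma R).Adj a b ↔ a ≠ b ∧ IsCoprime a.1 b.1 :=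
  and_congr_right fun _ => Ideal.sup_eq_top_iff_isCoprime _ _

lemma adj_of_isCoprime {a b : GammaVert R} (h : IsCoprime a.1 b.1) : (Gamma R).Adj a b :=
  adj_iff.mpr ⟨fun hab => a.2.1 (isCoprime_self.mp (hab ▸ h)), h⟩

lemma exists_adj (x : GammaVert R) : ∃ y, (Gamma R).Adj x y := by
  obtain ⟨t, ht⟩ : ∃ t, ¬IsUnit (x.1 * t + 1) := by
    by_contra! h
    exact x.2.2 (Ideal.mem_jacobson_bot.mpr h)
  have hcop : IsCoprime (x.1 * t + 1) x.1 := ⟨1, -t, by ring⟩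
  exact ⟨.ofIsCoprime ht x hcop, adj_of_isCoprime hcop.symm⟩

variable {x : GammaVert R}

lemma eq_of_isCoprime_of_forall_isCycle_length_ne_four {y z : GammaVert R}
    (hxy : (Gamma R).Adj x y) (hxz : (Gamma R).Adj x z) (hyz : y ≠ z)
    (hrect : ∀ c : (Gamma R).Walk x x, c.IsCycle → c.length ≠ 4) ⦃w : R⦄ (hw : ¬IsUnit w)
    (hwy : IsCoprime w y.1) (hwz : IsCoprime w z.1) : w = x.1 := by
  by_contra hne
  let v : GammaVert R := .ofIsCoprime hw y hwy
  have hxv : x ≠ v := fun h => hne (congrArg Subtype.val h).symm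
  obtain ⟨c, hc, hlen⟩ := exists_isCycle_length_four hxy (adj_of_isCoprime (b := v) hwy.symm)
    (adj_of_isCoprime (a := v) hwz) hxz.symm hxv hyz
  exact hrect c hc hlen

lemma isUnit_of_forall_isCycle_length_ne_three
    (htri : ∀ c : (Gamma R).Walk x x, c.IsCycle → c.length ≠ 3) {n : GammaVert R}
    (hxn : IsCoprime x.1 n.1) {v : R} (hvx : IsCoprime v x.1) (hvn : IsCoprime v n.1) :
    IsUnit v := by
  by_contra hv
  let u : GammaVert R := .ofIsCoprime hv x hvx
  obtain ⟨c, hc, hlen⟩ := exists_isCycle_length_three (adj_of_isCoprime hxn)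
    (adj_of_isCoprime (b := u) hvn.symm) (adj_of_isCoprime (a := u) hvx)
  exact htri c hc hlen

lemma eq_or_eq_of_adj_of_forall_isCycle_length_ne {y z : GammaVert R}
    (hxy : (Gamma R).Adj x y) (hxz : (Gamma R).Adj x z) (hyz : y ≠ z)
    (hno : ∀ c : (Gamma R).Walk x x, c.IsCycle → c.length ≠ 3 ∧ c.length ≠ 4)
    {a b : GammaVert R} (hab : (Gamma R).Adj a b) : a = x ∨ b = x := by
  have cxy := (adj_iff.mp hxy).2
  have cxz := (adj_iff.mp hxz).2
  have hrect := eq_of_isCoprime_of_forall_isCycle_length_ne_four hxy hxz hyz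
    fun c hc => (hno c hc).2
  have hidem : IsIdempotentElem x.1 :=
    hrect (fun hu => x.2.1 (isUnit_of_mul_isUnit_left hu)) (cxy.mul_left cxy) (cxz.mul_left cxz)
  have hsplit := hidem.mul_eq_zero_or_isCoprime fun w hw => or_iff_not_imp_left.mpr fun hu =>
    hrect hu (hw ▸ cxy).of_mul_left_right (hw ▸ cxz).of_mul_left_right
  have hend {a b : GammaVert R} (hab : IsCoprime a.1 b.1) (hxb : IsCoprime x.1 b.1) : a = x := by
    have hJ := mul_mem_jacobson_bot_of_forall_isCoprime_isUnit fun v hvx hvb =>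
      isUnit_of_forall_isCycle_length_ne_three (fun c hc => (hno c hc).1) hxb hvx hvb
    obtain ⟨c, hc⟩ := hidem.dvd_of_isCoprime_of_mul_mem_jacobson_bot hab hJ
    exact Subtype.ext (hrect a.2.1 (hc ▸ cxy).of_mul_left_left (hc ▸ cxz).of_mul_left_left)
  have cab := (adj_iff.mp hab).2
  rcases hsplit b.1 with hb | hb
  · rcases hsplit a.1 with ha | ha
    · obtain ⟨r, s, hrs⟩ := cab
      have h1 : 1 - x.1 = 0 := by linear_combination -(1 - x.1) * hrs + r * ha + s * hb
      exact absurd (sub_eq_zero.mp h1 ▸ isUnit_one) x.2.1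
    · exact .inr (hend cab.symm ha)
  · exact .inl (hend cab hb)

lemma isAcyclic_of_forall_isCycle_length_ne {y z : GammaVert R}
    (hxy : (Gamma R).Adj x y) (hxz : (Gamma R).Adj x z) (hyz : y ≠ z)
    (hno : ∀ c : (Gamma R).Walk x x, c.IsCycle → c.length ≠ 3 ∧ c.length ≠ 4) :
    (Gamma R).IsAcyclic :=
  isAcyclic_of_forall_adj_eq_or_eq fun _ _ =>
    eq_or_eq_of_adj_of_forall_isCycle_length_ne hxy hxz hyz hno

end Gamma

end

/-- Theorem 3.10: if `Γ(R)` contains a cycle, then every vertex on a cycle lies on a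
triangle or a rectangle (the core is a union of triangles and rectangles), and every
vertex is an end vertex (has exactly one neighbour) or lies on some cycle. -/
theorem gamma_core_structure {R : Type*} [CommRing R]
    (h : ∃ (v : GammaVert R) (c : (Gamma R).Walk v v), c.IsCycle) :
    (∀ x : GammaVert R, (∃ c : (Gamma R).Walk x x, c.IsCycle) →
      ∃ c : (Gamma R).Walk x x, c.IsCycle ∧ (c.length = 3 ∨ c.length = 4)) ∧
    (∀ x : GammaVert R,
      (∃! y : GammaVert R, (Gamma R).Adj x y) ∨
      ∃ c : (Gamma R).Walk x x, c.IsCycle) := by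
  refine ⟨fun x ⟨c, hc⟩ => ?_, fun x => ?_⟩
  · by_contra! hno
    exact Gamma.isAcyclic_of_forall_isCycle_length_ne (c.adj_snd hc.not_nil)
      (c.adj_penultimate hc.not_nil).symm hc.snd_ne_penultimate hno c hc
  · by_cases hcyc : ∃ c : (Gamma R).Walk x x, c.IsCycle
    · exact .inr hcyc
    obtain ⟨y, hy⟩ := Gamma.exists_adj x
    refine .inl ⟨y, hy, fun z hz => ?_⟩
    by_contra hzy
    obtain ⟨v, c, hc⟩ := h
    exact Gamma.isAcyclic_of_forall_isCycle_length_ne hy hz (Ne.symm hzy)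
      (fun c hc => absurd ⟨c, hc⟩ hcyc) c hc
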